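/- arXiv:1903.02730 — 5 statements merged into one kernel-verified Lean document; each statement's English description precedes it below -/
import Mathlib

section
/- Let p ≥ 7 be a prime. Define M : {1,2,3,...} → ℕ by M(s) = 2s−1 for s ∈ {1,2,3}, and for s > 3, M(s) = max({M(k) + M(s−k) : 0 < k < s} ∪ {p·M(s−3)}) + 1. Then for all r ≥ 0 and s ∈ {1,2,3}, M(3r+s) = (2s−1)p^r + (p^r − 1)/(p − 1). -/
private def G (p : ℕ) : ℕ → ℕ
  | 0 => 0
  | r + 1 => p * G p r + 1

private lemma G_aux (q : ℕ) : ∀ r, q * G (q+1) r + 1 = (q+1)^r := by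
  intro r
  induction r with
  | zero => simp [G]
  | succ n ih =>
    show q * ((q+1) * G (q+1) n + 1) + 1 = (q+1)^(n+1)
    rw [pow_succ, ← ih]; ring

private lemma G_div (p : ℕ) (hp : 2 ≤ p) (r : ℕ) : (p^r - 1)/(p-1) = G p r := by
  have h := G_aux (p-1) r
  rw [show p - 1 + 1 = p by omega] at h
  exact Nat.div_eq_of_eq_mul_left (by omega)
    ((Nat.sub_eq_of_eq_add h.symm).trans (mul_comm _ _))

private lemma G_add_le (p : ℕ) (hp : 1 ≤ p) (a b : ℕ) : G p a + G p b ≤ G p (a+b) := by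
  induction b with
  | zero => simp [G]
  | succ n ih =>
    have h1 : G p a ≤ p * G p a := Nat.le_mul_of_pos_left _ (by omega)
    have h2 : p * G p a + p * G p n ≤ p * G p (a+n) := by
      have := Nat.mul_le_mul_left p ih
      nlinarith
    show G p a + (p * G p n + 1) ≤ p * G p (a+n) + 1
    linarith

private lemma caseA (p a b ci cj : ℕ) (hp : 7 ≤ p) :
    ci * p^a + G p a + (cj * p^b + G p b) + 1 ≤ (ci + cj + 1) * p^(a+b) + G p (a+b) := by
  have h1 : ci * p^a ≤ ci * p^(a+b) :=
    Nat.mul_le_mul_left _ (Nat.pow_le_pow_right (by omega) (by omega))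
  have h2 : cj * p^b ≤ cj * p^(a+b) :=
    Nat.mul_le_mul_left _ (Nat.pow_le_pow_right (by omega) (by omega))
  have h3 : G p a + G p b ≤ G p (a+b) := G_add_le p (by omega) a b
  have h4 : 1 ≤ p^(a+b) := Nat.one_le_pow _ _ (by omega)
  have h5 : (ci + cj + 1) * p^(a+b) = ci * p^(a+b) + cj * p^(a+b) + p^(a+b) := by ring
  linarith

private lemma caseB (p a b ci cj cs : ℕ) (hp : 7 ≤ p) (h : ci + cj = cs + 5)
    (hcs : 1 ≤ cs) :
    ci * p^a + G p a + (cj * p^b + G p b) ≤ p * (cs * p^(a+b) + G p (a+b)) := by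
  have h1 : ci * p^a ≤ ci * p^(a+b) :=
    Nat.mul_le_mul_left _ (Nat.pow_le_pow_right (by omega) (by omega))
  have h2 : cj * p^b ≤ cj * p^(a+b) :=
    Nat.mul_le_mul_left _ (Nat.pow_le_pow_right (by omega) (by omega))
  have h3 : G p a + G p b ≤ G p (a+b) := G_add_le p (by omega) a b
  have h4 : G p (a+b) ≤ p * G p (a+b) := Nat.le_mul_of_pos_left _ (by omega)
  have h6 : ci + cj ≤ p * cs := by nlinarith
  have h5 : (ci + cj) * p^(a+b) ≤ (p * cs) * p^(a+b) := Nat.mul_le_mul_right _ h6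
  have h7 : (ci + cj) * p^(a+b) = ci * p^(a+b) + cj * p^(a+b) := by ring
  have h8 : p * (cs * p^(a+b) + G p (a+b)) = (p * cs) * p^(a+b) + p * G p (a+b) := by ring
  linarith

private lemma main_lemma (p : ℕ) (hp7 : 7 ≤ p) (M : ℕ → ℕ)
    (hbase : ∀ s, 1 ≤ s → s ≤ 3 → M s = 2 * s - 1)
    (hrec : ∀ s, 3 < s →
      M s = max ((Finset.Ioo 0 s).sup fun k => M k + M (s - k)) (p * M (s - 3)) + 1) :
    ∀ n r s, 1 ≤ s → s ≤ 3 → n = 3 * r + s → M n = (2 * s - 1) * p ^ r + G p r := by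
  intro n
  induction n using Nat.strong_induction_on with
  | _ n ih =>
    intro r s hs1 hs3 hn
    by_cases h4 : n ≤ 3
    · have hr : r = 0 := by omega
      have hsn : s = n := by omega
      subst hr hsn
      simp [G, hbase s hs1 (by omega)]
    · push_neg at h4
      obtain ⟨r', rfl⟩ : ∃ r', r = r' + 1 := ⟨r - 1, by omega⟩
      have hM3 : M (n - 3) = (2*s-1) * p ^ r' + G p r' :=
        ih (n-3) (by omega) r' s hs1 hs3 (by omega)
      have hsup : (Finset.Ioo 0 n).sup (fun k => M k + M (n - k)) ≤ p * M (n - 3) := by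
        apply Finset.sup_le
        intro k hk
        rw [Finset.mem_Ioo] at hk
        obtain ⟨a, i, hi1, hi3, hka⟩ : ∃ a i, 1 ≤ i ∧ i ≤ 3 ∧ k = 3*a+i :=
          ⟨(k-1)/3, (k-1)%3+1, by omega, by omega, by omega⟩
        obtain ⟨b, j, hj1, hj3, hkb⟩ : ∃ b j, 1 ≤ j ∧ j ≤ 3 ∧ n - k = 3*b+j :=
          ⟨(n-k-1)/3, (n-k-1)%3+1, by omega, by omega, by omega⟩
        have hMk : M k = (2*i-1) * p ^ a + G p a := ih k (by omega) a i hi1 hi3 hka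
        have hMnk : M (n - k) = (2*j-1) * p ^ b + G p b :=
          ih (n-k) (by omega) b j hj1 hj3 hkb
        rw [hMk, hMnk, hM3]
        by_cases hij : i + j ≤ 3
        · -- s = i + j, a + b = r' + 1
          have hab : a + b = r' + 1 := by omega
          have key := caseA p a b (2*i-1) (2*j-1) hp7
          have hc : (2*i-1) + (2*j-1) + 1 = 2*s-1 := by omega
          rw [hc] at key
          have heq : (2*s-1) * p^(a+b) + G p (a+b)
              = p * ((2*s-1) * p ^ r' + G p r') + 1 := by
            rw [hab]
            show (2*s-1) * p^(r'+1) + (p * G p r' + 1) = _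
            rw [pow_succ]
            ring
          rw [heq] at key
          exact le_of_add_le_add_right key
        · -- s = i + j - 3, a + b = r'
          have hab : a + b = r' := by omega
          have key := caseB p a b (2*i-1) (2*j-1) (2*s-1) hp7 (by omega) (by omega)
          rw [hab] at key
          exact key
      rw [hrec n h4, max_eq_right hsup, hM3]
      show p * ((2*s-1) * p ^ r' + G p r') + 1 = (2*s-1) * p^(r'+1) + (p * G p r' + 1)
      rw [pow_succ]
      ring

/-- The May filtration formula for the generators of the third Morava
stabilizer algebra `S(3)`: if `M` satisfies `M s = 2s−1` for `s ∈ {1,2,3}` and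
`M s = max({M k + M (s−k) : 0 < k < s} ∪ {p·M (s−3)}) + 1` for `s > 3`, then
`M (3r+s) = (2s−1)·p^r + (p^r − 1)/(p − 1)`. -/
theorem stmt_2 (p : ℕ) (hp : p.Prime) (hp7 : 7 ≤ p) (M : ℕ → ℕ)
    (hbase : ∀ s, 1 ≤ s → s ≤ 3 → M s = 2 * s - 1)
    (hrec : ∀ s, 3 < s →
      M s = max ((Finset.Ioo 0 s).sup fun k => M k + M (s - k)) (p * M (s - 3)) + 1) :
    ∀ (r s : ℕ), 1 ≤ s → s ≤ 3 →
      M (3 * r + s) = (2 * s - 1) * p ^ r + (p ^ r - 1) / (p - 1) := by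
  intro r s hs1 hs3
  rw [G_div p (by omega) r]
  exact main_lemma p hp7 M hbase hrec (3*r+s) r s hs1 hs3 rfl
end

section
/- Let p ≥ 7 be a prime and define M : {1,2,3,...} → ℕ by M(s) = 2s−1 for s ∈ {1,2,3} and M(s) = p·M(s−3) + 1 for s > 3. Then for every i > 3 and every k with 0 < k < i, one has p·M(i−3) > M(k) + M(i−k). In particular the maximum in the May filtration recursion is always attained by the term p·M(i−3). -/
/-- In the May filtration recursion for `S(3)`, the maximum is attained at the
term `p·M(i−3)`: with `M s = 2s−1` for `s ∈ {1,2,3}` and `M s = p·M(s−3) + 1`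
for `s > 3`, one has `M k + M (i−k) < p·M(i−3)` for all `0 < k < i`, `i > 3`. -/
theorem stmt_3 (p : ℕ) (hp : p.Prime) (hp7 : 7 ≤ p) (M : ℕ → ℕ)
    (hbase : ∀ s, 1 ≤ s → s ≤ 3 → M s = 2 * s - 1)
    (hrec : ∀ s, 3 < s → M s = p * M (s - 3) + 1) :
    ∀ i, 3 < i → ∀ k, 0 < k → k < i → M k + M (i - k) < p * M (i - 3) := by
  have hM1 : M 1 = 1 := by simpa using hbase 1 (by norm_num) (by norm_num)
  have hM2 : M 2 = 3 := by simpa using hbase 2 (by norm_num) (by norm_num)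
  have hM3 : M 3 = 5 := by simpa using hbase 3 (by norm_num) (by norm_num)
  have hM4 : M 4 = p + 1 := by
    have := hrec 4 (by norm_num); simpa [hM1] using this
  have hM5 : M 5 = 3 * p + 1 := by
    have := hrec 5 (by norm_num); rw [this]; simp [hM2]; ring
  have hM6 : M 6 = 5 * p + 1 := by
    have := hrec 6 (by norm_num); rw [this]; simp [hM3]; ring
  intro i
  induction i using Nat.strong_induction_on with
  | _ i IH =>
    intro hi k hk hki
    by_cases h6 : i ≤ 6
    · interval_cases i <;> interval_cases k <;>
        simp_all <;> nlinarith [hp7]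
    · -- i > 6, so k > 3 or i - k > 3
      have hpos : 0 < p := by omega
      by_cases hk3 : k < i - 3
      · -- i - k > 3
        have h1 := IH (i - 3) (by omega) (by omega) k hk hk3
        have e1 : i - 3 - k = i - k - 3 := by omega
        have e2 : i - 3 - 3 = i - 6 := by omega
        rw [e1, e2] at h1
        have eMik : M (i - k) = p * M (i - k - 3) + 1 := hrec (i - k) (by omega)
        have eMi3 : M (i - 3) = p * M (i - 6) + 1 := by
          rw [hrec (i - 3) (by omega), e2]
        rw [eMik, eMi3]
        have h2 : M k + M (i - k - 3) + 1 ≤ p * M (i - 6) := h1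
        have h3 := Nat.mul_le_mul_left p h2
        rw [Nat.mul_add, Nat.mul_add, Nat.mul_one] at h3
        have h4 : M k ≤ p * M k := Nat.le_mul_of_pos_left _ hpos
        rw [Nat.mul_add, Nat.mul_one]
        linarith
      · -- k > 3
        have hk3' : 3 < k := by omega
        have h1 := IH (i - 3) (by omega) (by omega) (i - k) (by omega) (by omega)
        have e1 : i - 3 - (i - k) = k - 3 := by omega
        have e2 : i - 3 - 3 = i - 6 := by omega
        rw [e1, e2] at h1
        have eMk : M k = p * M (k - 3) + 1 := hrec k hk3'
        have eMi3 : M (i - 3) = p * M (i - 6) + 1 := by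
          rw [hrec (i - 3) (by omega), e2]
        rw [eMk, eMi3]
        have h2 : M (i - k) + M (k - 3) + 1 ≤ p * M (i - 6) := h1
        have h3 := Nat.mul_le_mul_left p h2
        rw [Nat.mul_add, Nat.mul_add, Nat.mul_one] at h3
        have h4 : M (i - k) ≤ p * M (i - k) := Nat.le_mul_of_pos_left _ hpos
        rw [Nat.mul_add, Nat.mul_one]
        linarith
end

section
/- Let p be an odd prime, n ≥ 1, and suppose s, j are positive integers and k ≥ 0 is an integer satisfying (p^2−1)·s·p^k − (p−1)·j = (p^2−1)·p^n − (p−1)·p^n and j ≤ p^k + p^{k−1} − 1 (interpreting p^{k-1} as 0 when k = 0). Then k ≤ n, j = p^k, and s = (p^{n+1−k} + 1)/(p + 1); in particular p+1 divides p^{n+1−k}+1 and n+1−k is odd. -/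
/-- Degree computation: if `β_{sp^k/j}` has the same internal degree as
`β_{p^n/p^n}`, i.e. `(p²−1)sp^k − (p−1)j = (p²−1)p^n − (p−1)p^n`, and
`j ≤ p^k + p^{k−1} − 1` (with `p^{k-1}` read as `0` for `k = 0`), then `k ≤ n`,
`j = p^k` and `s = (p^{n+1−k}+1)/(p+1)`; in particular `(p+1) ∣ p^{n+1−k}+1`
and `n+1−k` is odd. -/
theorem stmt_5 (p n s k j : ℕ) (hp : p.Prime) (hodd : Odd p) (hn : 1 ≤ n)
    (hs : 0 < s) (hj : 0 < j)
    (hdeg : ((p ^ 2 - 1 : ℤ) * s * p ^ k - (p - 1) * j =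
      (p ^ 2 - 1) * p ^ n - (p - 1) * p ^ n))
    (hjb : j ≤ p ^ k + (if k = 0 then 0 else p ^ (k - 1)) - 1) :
    k ≤ n ∧ j = p ^ k ∧ s * (p + 1) = p ^ (n + 1 - k) + 1 ∧
      (p + 1) ∣ p ^ (n + 1 - k) + 1 ∧ Odd (n + 1 - k) := by
  have hp2 : 2 ≤ p := hp.two_le
  have hpne2 : p ≠ 2 := by
    rintro rfl
    exact (by decide : ¬ Odd 2) hodd
  have hp3 : 3 ≤ p := by omega
  -- cancel the factor p - 1 in the degree equation
  have hcancel : ((p : ℤ) - 1) * (((p : ℤ) + 1) * s * p ^ k)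
      = ((p : ℤ) - 1) * ((p : ℤ) ^ (n + 1) + j) := by
    linear_combination hdeg
  have hne : ((p : ℤ) - 1) ≠ 0 := by
    have : (3 : ℤ) ≤ (p : ℤ) := by exact_mod_cast hp3
    omega
  have keyZ : ((p : ℤ) + 1) * s * p ^ k = (p : ℤ) ^ (n + 1) + j :=
    mul_left_cancel₀ hne hcancel
  have keyN : (p + 1) * s * p ^ k = p ^ (n + 1) + j := by exact_mod_cast keyZ
  have hk0 : k ≠ 0 := by
    rintro rfl
    simp at hjb
    omega
  have hpkpos : 0 < p ^ k := pow_pos (by omega) k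
  have hjb' : j < p ^ k + p ^ (k - 1) := by
    rw [if_neg hk0] at hjb
    omega
  have hsmall : p ^ (k - 1) ≤ p ^ k := Nat.pow_le_pow_right (by omega) (by omega)
  -- k ≤ n
  have hkn : k ≤ n := by
    by_contra hlt
    have hk1 : n + 1 ≤ k := by omega
    have e3 : p ^ (n + 1) ≤ p ^ k := Nat.pow_le_pow_right (by omega) hk1
    have h3 : (p + 1) * p ^ k ≤ (p + 1) * s * p ^ k :=
      Nat.mul_le_mul_right _ (Nat.le_mul_of_pos_right _ hs)
    have e4 : p * p ^ k + p ^ k ≤ p ^ (n + 1) + j := by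
      calc p * p ^ k + p ^ k = (p + 1) * p ^ k := by ring
        _ ≤ (p + 1) * s * p ^ k := h3
        _ = p ^ (n + 1) + j := keyN
    have e1 : 3 * p ^ k ≤ p * p ^ k := Nat.mul_le_mul_right _ hp3
    linarith
  -- j = p ^ k
  have hdvdsum : p ^ k ∣ p ^ (n + 1) + j := by
    rw [← keyN]; exact ⟨(p + 1) * s, by ring⟩
  have hdvdpow : p ^ k ∣ p ^ (n + 1) := pow_dvd_pow p (by omega)
  have hdvdj : p ^ k ∣ j := (Nat.dvd_add_right hdvdpow).mp hdvdsum
  obtain ⟨c, hc⟩ := hdvdj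
  have hc1 : c = 1 := by
    have hjlt : j < 2 * p ^ k := by linarith
    have : p ^ k * c < p ^ k * 2 := by omega
    have hclt : c < 2 := Nat.lt_of_mul_lt_mul_left this
    have : 0 < c := by
      rcases Nat.eq_zero_or_pos c with h | h
      · subst h; simp at hc; omega
      · exact h
    omega
  have hjpk : j = p ^ k := by rw [hc, hc1, mul_one]
  -- the s equation
  have hpowsplit : p ^ (n + 1) = p ^ (n + 1 - k) * p ^ k := by
    rw [← pow_add]
    congr 1
    omega
  have hseq : s * (p + 1) = p ^ (n + 1 - k) + 1 := by
    have : (s * (p + 1)) * p ^ k = (p ^ (n + 1 - k) + 1) * p ^ k := by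
      calc (s * (p + 1)) * p ^ k = (p + 1) * s * p ^ k := by ring
        _ = p ^ (n + 1) + j := keyN
        _ = p ^ (n + 1 - k) * p ^ k + p ^ k := by rw [hpowsplit, hjpk]
        _ = (p ^ (n + 1 - k) + 1) * p ^ k := by ring
    exact Nat.eq_of_mul_eq_mul_right hpkpos this
  have hdvd : (p + 1) ∣ p ^ (n + 1 - k) + 1 := ⟨s, by rw [← hseq]; ring⟩
  -- oddness of n + 1 - k
  have hoddm : Odd (n + 1 - k) := by
    set m := n + 1 - k with hm
    rcases Nat.even_or_odd m with hev | hodd'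
    · exfalso
      have hd1 : ((p : ℤ) + 1) ∣ (p : ℤ) ^ m - (-1 : ℤ) ^ m := by
        have := sub_dvd_pow_sub_pow (p : ℤ) (-1 : ℤ) m
        simpa using this
      have hd2 : ((p : ℤ) + 1) ∣ (p : ℤ) ^ m + 1 := by
        have : ((p : ℤ) + 1) ∣ ((p ^ m + 1 : ℕ) : ℤ) := by
          exact_mod_cast Int.natCast_dvd_natCast.mpr hdvd
        simpa using this
      have hm1 : (-1 : ℤ) ^ m = 1 := Even.neg_one_pow hev
      rw [hm1] at hd1
      have hd3 : ((p : ℤ) + 1) ∣ 2 := by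
        have := dvd_sub hd2 hd1
        simpa using this
      have := Int.le_of_dvd (by norm_num) hd3
      have : (3 : ℤ) ≤ (p : ℤ) := by exact_mod_cast hp3
      omega
    · exact hodd'
  exact ⟨hkn, hjpk, hseq, hdvd, hoddm⟩
end

section
/- In the differential graded exterior algebra (Λ, d) over Z/p with generators h_{i,j} (i ∈ {1,2,3}, j ∈ Z/3), differential d(h_{1,j}) = 0, d(h_{2,j}) = −h_{1,j}h_{1,j+1}, d(h_{3,j}) = −h_{1,j}h_{2,j+1} − h_{2,j}h_{1,j+2} extended by the graded Leibniz rule, the element e_{4,i} = h_{3,i}h_{1,i} + h_{2,i}h_{2,i+2} + h_{1,i}h_{3,i+1} is a cocycle for each i ∈ Z/3: d(e_{4,i}) = 0. -/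
open ExteriorAlgebra

/-- The exterior algebra over `ℤ/p` on generators `h_{i,j}`, `i ∈ {1,2,3}`,
`j ∈ ℤ/3` (the `E₂`-term of the May spectral sequence for `S(3)`). -/
abbrev MayAlg (p : ℕ) : Type :=
  ExteriorAlgebra (ZMod p) ((Fin 3 × ZMod 3) → ZMod p)

/-- The generator `h_{i+1,j}` (so `hGen p 0 j` is `h_{1,j}`, etc.). -/
noncomputable def hGen (p : ℕ) (i : Fin 3) (j : ZMod 3) : MayAlg p :=
  ExteriorAlgebra.ι (ZMod p) (Pi.single (i, j) (1 : ZMod p))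

/-- Each `e_{4,i} = h_{3,i}h_{1,i} + h_{2,i}h_{2,i+2} + h_{1,i}h_{3,i+1}` is a
cocycle for the first May differential. -/
theorem stmt_10 (p : ℕ) (hp : p.Prime) (hodd : Odd p)
    (d : MayAlg p →ₗ[ZMod p] MayAlg p)
    (hd1 : ∀ j : ZMod 3, d (hGen p 0 j) = 0)
    (hd2 : ∀ j : ZMod 3, d (hGen p 1 j) = -(hGen p 0 j * hGen p 0 (j + 1)))
    (hd3 : ∀ j : ZMod 3, d (hGen p 2 j) =
      -(hGen p 0 j * hGen p 1 (j + 1)) - hGen p 1 j * hGen p 0 (j + 2))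
    (hLeib : ∀ (n : ℕ) (x y : MayAlg p),
      x ∈ (LinearMap.range (ExteriorAlgebra.ι (ZMod p) :
            ((Fin 3 × ZMod 3) → ZMod p) →ₗ[ZMod p] MayAlg p) ^ n :
            Submodule (ZMod p) (MayAlg p)) →
      d (x * y) = d x * y + ((-1 : ZMod p) ^ n) • (x * d y)) :
    ∀ i : ZMod 3,
      d (hGen p 2 i * hGen p 0 i + hGen p 1 i * hGen p 1 (i + 2) +
         hGen p 0 i * hGen p 2 (i + 1)) = 0 := by
  intro i
  have mem : ∀ (a : Fin 3) (j : ZMod 3),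
      hGen p a j ∈ (LinearMap.range (ExteriorAlgebra.ι (ZMod p) :
        ((Fin 3 × ZMod 3) → ZMod p) →ₗ[ZMod p] MayAlg p) ^ 1 :
        Submodule (ZMod p) (MayAlg p)) := by
    intro a j
    rw [pow_one]
    exact ⟨_, rfl⟩
  have L : ∀ (a : Fin 3) (j : ZMod 3) (y : MayAlg p),
      d (hGen p a j * y) = d (hGen p a j) * y - hGen p a j * d y := by
    intro a j y
    rw [hLeib 1 _ _ (mem a j), pow_one, neg_one_smul, sub_eq_add_neg]
  have h3 : ∀ j : ZMod 3, j + 3 = j := by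
    intro j; rw [show (3 : ZMod 3) = 0 from rfl, add_zero]
  have e1 : i + 1 + 2 = i := by rw [add_assoc]; exact h3 i
  have e2 : i + 2 + 1 = i := by rw [add_assoc]; exact h3 i
  have e0 : i + 1 + 1 = i + 2 := by ring
  rw [map_add, map_add, L, L, L, hd1, hd2, hd2, hd3, hd3, e0, e1, e2]
  noncomm_ring
end

section
/- In the differential graded exterior algebra (Λ, d) over Z/p with generators h_{i,j} (i ∈ {1,2,3}, j ∈ Z/3) and the first May differential, the element ξ = Σ_{i∈Z/3} h_{3,i+1}·e_{3,i} + h_{2,0}h_{2,1}h_{2,2}, where e_{3,i} = h_{1,i}h_{2,i+1} + h_{2,i}h_{1,i+2}, is a cocycle: d(ξ) = 0. -/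
open ExteriorAlgebra

/-- `e_{3,i} = h_{1,i}h_{2,i+1} + h_{2,i}h_{1,i+2}`. -/
noncomputable def eThree (p : ℕ) (i : ZMod 3) : MayAlg p :=
  hGen p 0 i * hGen p 1 (i + 1) + hGen p 1 i * hGen p 0 (i + 2)

lemma hGen_swap (p : ℕ) (i k : Fin 3) (j l : ZMod 3) :
    hGen p i j * hGen p k l = -(hGen p k l * hGen p i j) := by
  unfold hGen
  exact eq_neg_of_add_eq_zero_left (ExteriorAlgebra.ι_add_mul_swap _ _)

lemma hGen_swap' (p : ℕ) (i k : Fin 3) (j l : ZMod 3) (t : MayAlg p) :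
    hGen p i j * (hGen p k l * t) = -(hGen p k l * (hGen p i j * t)) := by
  rw [← mul_assoc, hGen_swap, neg_mul, mul_assoc]

lemma hGen_sq (p : ℕ) (i : Fin 3) (j : ZMod 3) :
    hGen p i j * hGen p i j = 0 :=
  ExteriorAlgebra.ι_sq_zero _

lemma hGen_sq' (p : ℕ) (i : Fin 3) (j : ZMod 3) (t : MayAlg p) :
    hGen p i j * (hGen p i j * t) = 0 := by
  rw [← mul_assoc, hGen_sq, zero_mul]

/-- `ξ = Σ_i h_{3,i+1}·e_{3,i} + h_{2,0}h_{2,1}h_{2,2}` is a cocycle for the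
first May differential. -/
theorem stmt_12 (p : ℕ) (hp : p.Prime) (hodd : Odd p)
    (d : MayAlg p →ₗ[ZMod p] MayAlg p)
    (hd1 : ∀ j : ZMod 3, d (hGen p 0 j) = 0)
    (hd2 : ∀ j : ZMod 3, d (hGen p 1 j) = -(hGen p 0 j * hGen p 0 (j + 1)))
    (hd3 : ∀ j : ZMod 3, d (hGen p 2 j) =
      -(hGen p 0 j * hGen p 1 (j + 1)) - hGen p 1 j * hGen p 0 (j + 2))
    (hLeib : ∀ (n : ℕ) (x y : MayAlg p),
      x ∈ (LinearMap.range (ExteriorAlgebra.ι (ZMod p) :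
            ((Fin 3 × ZMod 3) → ZMod p) →ₗ[ZMod p] MayAlg p) ^ n :
            Submodule (ZMod p) (MayAlg p)) →
      d (x * y) = d x * y + ((-1 : ZMod p) ^ n) • (x * d y)) :
    d ((hGen p 2 1 * eThree p 0 + hGen p 2 2 * eThree p 1 +
        hGen p 2 0 * eThree p 2) +
       hGen p 1 0 * hGen p 1 1 * hGen p 1 2) = 0 := by
  have m1 : ∀ (i : Fin 3) (j : ZMod 3),
      hGen p i j ∈ (LinearMap.range (ExteriorAlgebra.ι (ZMod p) :
        ((Fin 3 × ZMod 3) → ZMod p) →ₗ[ZMod p] MayAlg p) ^ 1 :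
        Submodule (ZMod p) (MayAlg p)) := by
    intro i j
    rw [pow_one]
    exact ⟨_, rfl⟩
  have m2 : hGen p 1 0 * hGen p 1 1 ∈
      (LinearMap.range (ExteriorAlgebra.ι (ZMod p) :
        ((Fin 3 × ZMod 3) → ZMod p) →ₗ[ZMod p] MayAlg p) ^ 2 :
        Submodule (ZMod p) (MayAlg p)) := by
    rw [sq]
    exact Submodule.mul_mem_mul ⟨_, rfl⟩ ⟨_, rfl⟩
  have de : ∀ i : ZMod 3, d (eThree p i) = 0 := by
    intro i
    have h11 : i + 1 + 1 = i + 2 := by ring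
    rw [eThree, map_add, hLeib 1 _ _ (m1 0 i), hLeib 1 _ _ (m1 1 i),
      hd1, hd2, hd2, hd1, h11]
    simp only [pow_one, neg_smul, one_smul, zero_mul, mul_zero, mul_neg,
      neg_neg, zero_add, add_zero]
    noncomm_ring
  rw [map_add, map_add, map_add,
    hLeib 1 _ _ (m1 2 1), hLeib 1 _ _ (m1 2 2), hLeib 1 _ _ (m1 2 0),
    hLeib 2 _ _ m2, hLeib 1 _ _ (m1 1 0),
    de 0, de 1, de 2, hd3, hd3, hd3, hd2, hd2, hd2]
  have z1 : ((0 : ZMod 3) + 1) = 1 := by decide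
  have z2 : ((0 : ZMod 3) + 2) = 2 := by decide
  have z3 : ((1 : ZMod 3) + 1) = 2 := by decide
  have z4 : ((1 : ZMod 3) + 2) = 0 := by decide
  have z5 : ((2 : ZMod 3) + 1) = 0 := by decide
  have z6 : ((2 : ZMod 3) + 2) = 1 := by decide
  rw [z1, z2, z3, z4, z5, z6]
  simp only [eThree, z1, z2, z3, z4, z5, z6, pow_one, neg_smul, one_smul,
    neg_one_sq, mul_zero, smul_zero, add_zero, zero_add]
  simp only [mul_add, add_mul, mul_neg, neg_mul, sub_mul, sub_eq_add_neg,
    mul_assoc, neg_neg, neg_add_rev]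
  simp only [hGen_sq, hGen_sq', mul_zero, zero_mul, neg_zero,
    hGen_swap' p 0 0 1 0, hGen_swap' p 0 0 2 0, hGen_swap' p 0 0 2 1,
    hGen_swap' p 1 0 0 0, hGen_swap' p 1 0 0 1, hGen_swap' p 1 0 0 2,
    hGen_swap' p 1 0 1 0, hGen_swap' p 1 0 1 1, hGen_swap' p 1 0 1 2,
    hGen_swap' p 1 0 2 0, hGen_swap' p 1 0 2 1, hGen_swap' p 1 0 2 2,
    hGen_swap' p 1 1 1 0, hGen_swap' p 1 1 2 0, hGen_swap' p 1 1 2 1,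
    hGen_swap p 0 0 1 0, hGen_swap p 0 0 2 0, hGen_swap p 0 0 2 1,
    hGen_swap p 1 0 0 0, hGen_swap p 1 0 0 1, hGen_swap p 1 0 0 2,
    hGen_swap p 1 0 1 0, hGen_swap p 1 0 1 1, hGen_swap p 1 0 1 2,
    hGen_swap p 1 0 2 0, hGen_swap p 1 0 2 1, hGen_swap p 1 0 2 2,
    hGen_swap p 1 1 1 0, hGen_swap p 1 1 2 0, hGen_swap p 1 1 2 1,
    mul_neg, neg_neg, mul_zero, zero_mul, neg_zero]
  abel
end
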